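/- Let n ≥ 1, b > 0, and x, x' ∈ ℝⁿ. Let U(x, b) denote the product over coordinates j = 1,…,n of the uniform probability measures on the intervals [x_j − b/2, x_j + b/2]. Then the total variation distance between U(x, b) and U(x', b) is at most ‖x − x'‖₁ / b, where ‖x − x'‖₁ = Σ_{j=1}^n |x_j − x'_j| is the ℓ₁-norm of the difference. -/

import Mathlib

open MeasureTheory

/-- Total variation distance between two measures:
`TV(μ, ν) = sup over measurable sets A of |μ(A) − ν(A)|`. -/
noncomputable def tvDist {X : Type*} [MeasurableSpace X] (μ ν : Measure X) : ℝ :=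
  ⨆ A : {A : Set X // MeasurableSet A}, |(μ A.1).toReal - (ν A.1).toReal|

/-- The uniform probability measure on the interval `[c − b/2, c + b/2]`. -/
noncomputable def uniformIcc (c b : ℝ) : Measure ℝ :=
  (ENNReal.ofReal b)⁻¹ • volume.restrict (Set.Icc (c - b / 2) (c + b / 2))

/-- The product uniform measure `U(x, b)` on `ℝⁿ`: the product over coordinates `j` of the
uniform probability measures on `[x_j − b/2, x_j + b/2]`. -/
noncomputable def uniformPi (n : ℕ) (x : Fin n → ℝ) (b : ℝ) : Measure (Fin n → ℝ) :=
  Measure.pi fun j => uniformIcc (x j) b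

/-!
Both `U(x, b)` and `U(x', b)` are `b⁻ⁿ` times Lebesgue measure on a cube of side `b`, so on the
cube around `x'` the first is dominated by the second: `U(x, b) A ≤ U(x', b) A + U(x, b) Cᶜ`,
where `C` is the cube around `x'`. A point leaves `C` only if one of its coordinates leaves
`[x'_j − b/2, x'_j + b/2]`, which under the `j`-th marginal `U(x_j, b)` has probability at most
`|x_j − x'_j| / b`; a union bound over the coordinates finishes the proof.
-/

open Set ENNReal

theorem tvDist_le_of_forall_le_add {X : Type*} [MeasurableSpace X] {μ ν : Measure X}
    [IsFiniteMeasure μ] [IsFiniteMeasure ν] {ε : ℝ≥0∞} (hε : ε ≠ ∞)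
    (hμν : ∀ A, MeasurableSet A → μ A ≤ ν A + ε)
    (hνμ : ∀ A, MeasurableSet A → ν A ≤ μ A + ε) :
    tvDist μ ν ≤ ε.toReal := by
  have : Nonempty {A : Set X // MeasurableSet A} := ⟨⟨∅, .empty⟩⟩
  refine ciSup_le fun A => abs_sub_le_iff.2 ⟨?_, ?_⟩
  · rw [sub_le_iff_le_add', ← toReal_add (measure_ne_top ν A.1) hε]
    exact toReal_mono (add_ne_top.2 ⟨measure_ne_top ν _, hε⟩) (hμν A.1 A.2)
  · rw [sub_le_iff_le_add', ← toReal_add (measure_ne_top μ A.1) hε]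
    exact toReal_mono (add_ne_top.2 ⟨measure_ne_top μ _, hε⟩) (hνμ A.1 A.2)

theorem smul_restrict_apply_le_add {X : Type*} [MeasurableSpace X] (μ : Measure X) (c : ℝ≥0∞)
    {t : Set X} (ht : MeasurableSet t) (s A : Set X) :
    (c • μ.restrict s) A ≤ (c • μ.restrict t) A + (c • μ.restrict s) tᶜ := by
  simp only [Measure.smul_apply, smul_eq_mul, ← mul_add]
  gcongr
  calc μ.restrict s A ≤ μ.restrict s (A ∩ t) + μ.restrict s tᶜ :=
        (measure_mono fun y hy => by by_cases h : y ∈ t <;> simp_all).trans (measure_union_le _ _)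
    _ ≤ μ.restrict t A + μ.restrict s tᶜ := by
        gcongr ?_ + _
        calc μ.restrict s (A ∩ t) = μ.restrict (t ∩ s) A := by
              rw [← Measure.restrict_apply' ht, Measure.restrict_restrict ht]
          _ ≤ μ.restrict t A := Measure.restrict_mono inter_subset_left le_rfl A

theorem volume_Icc_diff_Icc_le (a b a' b' : ℝ) :
    volume (Icc a b \ Icc a' b') ≤ ENNReal.ofReal (a' - a) + ENNReal.ofReal (b - b') := by
  calc volume (Icc a b \ Icc a' b') ≤ volume (Ico a a' ∪ Ioc b' b) :=
        measure_mono fun y ⟨⟨hay, hyb⟩, hy⟩ => by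
          rcases not_and_or.1 hy with h | h
          · exact Or.inl ⟨hay, not_le.1 h⟩
          · exact Or.inr ⟨not_le.1 h, hyb⟩
    _ ≤ _ := (measure_union_le _ _).trans_eq (by rw [Real.volume_Ico, Real.volume_Ioc])

theorem isProbabilityMeasure_uniformIcc (c : ℝ) {b : ℝ} (hb : 0 < b) :
    IsProbabilityMeasure (uniformIcc c b) := by
  constructor
  rw [uniformIcc, Measure.smul_apply, Measure.restrict_apply_univ, Real.volume_Icc,
    show c + b / 2 - (c - b / 2) = b by ring, smul_eq_mul]
  exact ENNReal.inv_mul_cancel (by simpa using hb) ofReal_ne_top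

theorem uniformIcc_compl_Icc_le (c c' : ℝ) {b : ℝ} (hb : 0 < b) :
    uniformIcc c b (Icc (c' - b / 2) (c' + b / 2))ᶜ ≤ ENNReal.ofReal (|c - c'| / b) := by
  have hshift : ENNReal.ofReal (c' - b / 2 - (c - b / 2)) +
      ENNReal.ofReal (c + b / 2 - (c' + b / 2)) = ENNReal.ofReal |c - c'| := by
    rcases le_total c c' with h | h
    · rw [abs_of_nonpos (by linarith),
        ofReal_of_nonpos (by linarith : c + b / 2 - (c' + b / 2) ≤ 0)]
      ring_nf
    · rw [abs_of_nonneg (by linarith),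
        ofReal_of_nonpos (by linarith : c' - b / 2 - (c - b / 2) ≤ 0)]
      ring_nf
  rw [uniformIcc, Measure.smul_apply, Measure.restrict_apply' measurableSet_Icc, smul_eq_mul,
    ← sdiff_eq_compl_inter, ofReal_div_of_pos hb, ← hshift, ENNReal.div_eq_inv_mul]
  gcongr
  exact volume_Icc_diff_Icc_le _ _ _ _

def cube {ι : Type*} (x : ι → ℝ) (b : ℝ) : Set (ι → ℝ) :=
  univ.pi fun j => Icc (x j - b / 2) (x j + b / 2)

theorem measurableSet_cube {ι : Type*} [Countable ι] (x : ι → ℝ) (b : ℝ) :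
    MeasurableSet (cube x b) :=
  .univ_pi fun _ => measurableSet_Icc

section UniformPi

variable {n : ℕ} {b : ℝ}

theorem isProbabilityMeasure_uniformPi (x : Fin n → ℝ) (hb : 0 < b) :
    IsProbabilityMeasure (uniformPi n x b) :=
  have := fun j => isProbabilityMeasure_uniformIcc (x j) hb
  Measure.pi.instIsProbabilityMeasure _

theorem uniformPi_eq_smul_restrict (x : Fin n → ℝ) (hb : 0 < b) :
    uniformPi n x b = (ENNReal.ofReal b)⁻¹ ^ n • volume.restrict (cube x b) := by
  have := fun j => isProbabilityMeasure_uniformIcc (x j) hb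
  refine Measure.pi_eq fun s hs => ?_
  rw [Measure.smul_apply, Measure.restrict_apply (.univ_pi hs), cube, ← pi_inter_distrib,
    volume_pi_pi, smul_eq_mul, ← Fin.prod_const, ← Finset.prod_mul_distrib]
  refine Finset.prod_congr rfl fun j _ => ?_
  rw [uniformIcc, Measure.smul_apply, Measure.restrict_apply (hs j), smul_eq_mul]

theorem uniformPi_compl_cube_le (x x' : Fin n → ℝ) (hb : 0 < b) :
    uniformPi n x b (cube x' b)ᶜ ≤ ∑ j, ENNReal.ofReal (|x j - x' j| / b) := by
  have := fun j => isProbabilityMeasure_uniformIcc (x j) hb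
  calc uniformPi n x b (cube x' b)ᶜ
      ≤ uniformPi n x b (⋃ j, Function.eval j ⁻¹' (Icc (x' j - b / 2) (x' j + b / 2))ᶜ) :=
        measure_mono fun y hy => mem_iUnion.2 (not_forall.1 (mt mem_univ_pi.2 hy))
    _ ≤ ∑ j, uniformPi n x b (Function.eval j ⁻¹' (Icc (x' j - b / 2) (x' j + b / 2))ᶜ) :=
        measure_iUnion_fintype_le _ _
    _ = ∑ j, uniformIcc (x j) b (Icc (x' j - b / 2) (x' j + b / 2))ᶜ := by
        congr! 1 with j
        exact (measurePreserving_eval _ j).measure_preimage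
          measurableSet_Icc.compl.nullMeasurableSet
    _ ≤ _ := Finset.sum_le_sum fun j _ => uniformIcc_compl_Icc_le (x j) (x' j) hb

theorem uniformPi_apply_le_add (x x' : Fin n → ℝ) (hb : 0 < b) (A : Set (Fin n → ℝ)) :
    uniformPi n x b A ≤ uniformPi n x' b A + ENNReal.ofReal ((∑ j, |x j - x' j|) / b) := by
  calc uniformPi n x b A ≤ uniformPi n x' b A + uniformPi n x b (cube x' b)ᶜ := by
        simpa only [uniformPi_eq_smul_restrict _ hb] using
          smul_restrict_apply_le_add volume _ (measurableSet_cube x' b) (cube x b) A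
    _ ≤ _ := by
        rw [Finset.sum_div, ofReal_sum_of_nonneg fun j _ => by positivity]
        gcongr
        exact uniformPi_compl_cube_le x x' hb

end UniformPi

theorem tvDist_uniformPi_le_general (n : ℕ) (b : ℝ) (hb : 0 < b) (x x' : Fin n → ℝ) :
    tvDist (uniformPi n x b) (uniformPi n x' b) ≤ (∑ j, |x j - x' j|) / b := by
  have := isProbabilityMeasure_uniformPi x hb
  have := isProbabilityMeasure_uniformPi x' hb
  calc tvDist (uniformPi n x b) (uniformPi n x' b)
      ≤ (ENNReal.ofReal ((∑ j, |x j - x' j|) / b)).toReal :=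
        tvDist_le_of_forall_le_add ofReal_ne_top (fun A _ => uniformPi_apply_le_add x x' hb A)
          fun A _ => by simpa only [abs_sub_comm] using uniformPi_apply_le_add x' x hb A
    _ = (∑ j, |x j - x' j|) / b := toReal_ofReal (by positivity)

/-- for `n ≥ 1`, `b > 0` and `x, x' ∈ ℝⁿ`, the total variation distance between
`U(x, b)` and `U(x', b)` is at most `‖x − x'‖₁ / b`. -/
theorem tvDist_uniformPi_le (n : ℕ) (hn : 1 ≤ n) (b : ℝ) (hb : 0 < b) (x x' : Fin n → ℝ) :
    tvDist (uniformPi n x b) (uniformPi n x' b) ≤ (∑ j, |x j - x' j|) / b :=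
  tvDist_uniformPi_le_general n b hb x x'
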